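/- For all real x > 0, 2·(sinh x)/x + (tanh x)/x > 3. -/

import Mathlib

/-! Clearing denominators, the inequality reads `3 x cosh x < 2 sinh x cosh x + sinh x`. The
difference `huygensGap` of the two sides vanishes at `0` and its derivative is
`(cosh - 1)² + 3 sinh · (sinh - id)` (using `cosh² - sinh² = 1`), which is positive on `(0, ∞)`
since `t < sinh t` there. -/

open Real Set

noncomputable def huygensGap (t : ℝ) : ℝ :=
  2 * sinh t * cosh t + sinh t - 3 * t * cosh t

lemma hasDerivAt_huygensGap (t : ℝ) :
    HasDerivAt huygensGap (2 * (cosh t ^ 2 + sinh t ^ 2) - 2 * cosh t - 3 * t * sinh t) t := by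
  have h := ((((hasDerivAt_sinh t).const_mul 2).fun_mul (hasDerivAt_cosh t)).add
    (hasDerivAt_sinh t)).sub (((hasDerivAt_id' t).const_mul 3).fun_mul (hasDerivAt_cosh t))
  exact h.congr_deriv (by ring)

lemma three_mul_mul_sinh_lt {t : ℝ} (ht : 0 < t) :
    3 * t * sinh t < 2 * (cosh t ^ 2 + sinh t ^ 2) - 2 * cosh t := by
  have hts : 3 * t * sinh t < 3 * sinh t * sinh t :=
    mul_lt_mul_of_pos_right (by linarith [self_lt_sinh_iff.mpr ht]) (sinh_pos_iff.mpr ht)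
  nlinarith [cosh_sq_sub_sinh_sq t, sq_nonneg (cosh t - 1)]

lemma strictMonoOn_huygensGap : StrictMonoOn huygensGap (Ici 0) := by
  refine strictMonoOn_of_deriv_pos (convex_Ici 0)
    (fun t _ => (hasDerivAt_huygensGap t).continuousAt.continuousWithinAt) fun t ht => ?_
  rw [interior_Ici] at ht
  rw [(hasDerivAt_huygensGap t).deriv]
  linarith [three_mul_mul_sinh_lt ht]

lemma huygensGap_pos {x : ℝ} (hx : 0 < x) : 0 < huygensGap x := by
  have h0 : huygensGap 0 = 0 := by simp [huygensGap]
  exact h0 ▸ strictMonoOn_huygensGap self_mem_Ici hx.le hx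

theorem huygens_hyperbolic (x : ℝ) (hx : 0 < x) :
    2 * (Real.sinh x) / x + (Real.tanh x) / x > 3 := by
  have key : 0 < huygensGap x := huygensGap_pos hx
  rw [huygensGap] at key
  rw [gt_iff_lt, ← add_div, lt_div_iff₀ hx, tanh_eq_sinh_div_cosh, ← sub_lt_iff_lt_add',
    lt_div_iff₀ (cosh_pos x)]
  linarith
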